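/- Correctness of lazy multiply invariant: in a segment tree where each node v stores sum(v) and a pending multiplier mult(v), and the true value of leaf ℓ is its stored base value times the product of mult(v) over all ancestors v of ℓ, the LazyMultiply operation on range [l,r] with factor c (which multiplies mult and sum at fully-contained nodes and pushes mult down at partially-intersecting nodes) preserves the invariant that sum(v) · ∏_{ancestors u of v} mult(u) equals the sum of true values of leaves under v, and results in every true leaf value in [l,r] being multiplied by c while leaves outside [l,r] are unchanged. -/

import Mathlib

/-- A segment tree node: either a leaf (storing its index, its stored value `sum`
and a pending multiplier `mult`) or an internal node (storing the range `[low, high]`,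
the aggregate `sum` and the pending multiplier `mult`, plus two children). -/
inductive STree where
  | leaf (idx : ℕ) (sum mult : ℝ)
  | node (low high : ℕ) (sum mult : ℝ) (lc rc : STree)

namespace STree

/-- The stored `sum` field of the root of a tree. -/
def sumOf : STree → ℝ
  | leaf _ s _ => s
  | node _ _ s _ _ _ => s

/-- Sum of the *true* values of all leaves of `t`, where `acc` is the accumulated
product of the `mult` fields of the (strict) ancestors of `t`: the true value of a
leaf is its stored value times the product of `mult` over all ancestors. -/
def total (acc : ℝ) : STree → ℝ
  | leaf _ s _ => acc * s
  | node _ _ _ m lc rc => total (acc * m) lc + total (acc * m) rc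

/-- Sum of the true values of the leaves of `t` whose index lies in `[l, r]`,
with accumulated ancestor multiplier `acc`. -/
def rSum (acc : ℝ) (l r : ℕ) : STree → ℝ
  | leaf i s _ => if l ≤ i ∧ i ≤ r then acc * s else 0
  | node _ _ _ m lc rc => rSum (acc * m) l r lc + rSum (acc * m) l r rc

/-- The lazy-propagation invariant: at every internal node, the stored `sum`
(scaled by the ancestor multipliers) equals the sum of the true values of the
leaves below it, i.e. `sum = total mult lc + total mult rc`. -/
def Inv : STree → Prop
  | leaf _ _ _ => True
  | node _ _ s m lc rc => s = total m lc + total m rc ∧ Inv lc ∧ Inv rc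

/-- The list of leaf indices of a tree. -/
def idxs : STree → List ℕ
  | leaf i _ _ => [i]
  | node _ _ _ _ lc rc => idxs lc ++ idxs rc

/-- Well-formedness: every leaf index below a node lies within that node's range. -/
def WF : STree → Prop
  | leaf _ _ _ => True
  | node lo hi _ _ lc rc => WF lc ∧ WF rc ∧ ∀ i ∈ idxs lc ++ idxs rc, lo ≤ i ∧ i ≤ hi

/-- Pushing a pending multiplier `c` onto the root of a tree (multiplying both its
`sum` and `mult` fields), as done when a parent propagates its multiplier down. -/
def applyAll (c : ℝ) : STree → STree
  | leaf i s m => leaf i (s * c) (m * c)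
  | node lo hi s m lc rc => node lo hi (s * c) (m * c) lc rc

/-- Number of nodes of a tree (for termination). -/
def size : STree → ℕ
  | leaf _ _ _ => 1
  | node _ _ _ _ lc rc => size lc + size rc + 1

theorem size_applyAll (c : ℝ) (t : STree) : size (applyAll c t) = size t := by
  cases t <;> rfl

/-- `LazyMultiply` on range `[l, r]` with factor `c`: if the node's range does not
intersect `[l, r]`, do nothing; if it is fully contained, multiply its `sum` and
`mult` by `c`; otherwise push the pending multiplier to both children, reset it
to `1`, recurse on both children and recompute `sum`. -/
def lazyMul (l r : ℕ) (c : ℝ) : STree → STree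
  | leaf i s m => if l ≤ i ∧ i ≤ r then leaf i (s * c) (m * c) else leaf i s m
  | node lo hi s m lc rc =>
      if hi < l ∨ r < lo then node lo hi s m lc rc
      else if l ≤ lo ∧ hi ≤ r then node lo hi (s * c) (m * c) lc rc
      else
        let lc' := lazyMul l r c (applyAll m lc)
        let rc' := lazyMul l r c (applyAll m rc)
        node lo hi (sumOf lc' + sumOf rc') 1 lc' rc'
  termination_by t => size t
  decreasing_by
    all_goals (simp [size_applyAll, size]; try omega)

/-! True leaf values depend on the ancestor multipliers only through their product, and
linearly (`rSum_eq_mul`); so pushing a node's pending multiplier `m` onto its children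
(`applyAll m`) while resetting it to `1` changes no true value, and a node fully inside
`[l, r]` that absorbs `c` scales exactly the true values of its own leaves. Well-formedness
confines the leaves of a node to its range, which settles the disjoint and contained cases. -/

theorem rSum_eq_mul (a : ℝ) (l r : ℕ) (t : STree) : rSum a l r t = a * rSum 1 l r t := by
  induction t generalizing a with
  | leaf i s m => simp only [rSum]; split_ifs <;> ring
  | node lo hi s m lc rc ihl ihr =>
    simp only [rSum]
    rw [ihl (a * m), ihr (a * m), ihl (1 * m), ihr (1 * m)]
    ring

theorem total_eq_mul (a : ℝ) (t : STree) : total a t = a * total 1 t := by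
  induction t generalizing a with
  | leaf i s m => simp only [total]; ring
  | node lo hi s m lc rc ihl ihr =>
    simp only [total]
    rw [ihl (a * m), ihr (a * m), ihl (1 * m), ihr (1 * m)]
    ring

theorem rSum_applyAll (a : ℝ) (l r : ℕ) (c : ℝ) (t : STree) :
    rSum a l r (applyAll c t) = c * rSum a l r t := by
  cases t with
  | leaf i s m => simp only [applyAll, rSum]; split_ifs <;> ring
  | node lo hi s m lc rc =>
    simp only [applyAll, rSum]
    rw [rSum_eq_mul (a * (m * c)) l r lc, rSum_eq_mul (a * (m * c)) l r rc,
      rSum_eq_mul (a * m) l r lc, rSum_eq_mul (a * m) l r rc]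
    ring

theorem rSum_eq_zero_of_not_mem (a : ℝ) {i : ℕ} {t : STree} (h : i ∉ idxs t) :
    rSum a i i t = 0 := by
  induction t generalizing a with
  | leaf j s m =>
    simp only [idxs, List.mem_singleton] at h
    simp only [rSum]
    rw [if_neg (by omega)]
  | node lo hi s m lc rc ihl ihr =>
    simp only [idxs, List.mem_append, not_or] at h
    simp only [rSum, ihl _ h.1, ihr _ h.2, add_zero]

theorem not_mem_idxs_of_WF {lo hi : ℕ} {s m : ℝ} {lc rc : STree}
    (hwf : WF (node lo hi s m lc rc)) {i : ℕ} (hout : i < lo ∨ hi < i) :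
    i ∉ idxs (node lo hi s m lc rc) := fun hmem => by
  have := hwf.2.2 i hmem
  omega

theorem idxs_applyAll (c : ℝ) (t : STree) : idxs (applyAll c t) = idxs t := by
  cases t <;> rfl

theorem WF_applyAll (c : ℝ) {t : STree} (h : WF t) : WF (applyAll c t) := by
  cases t <;> exact h

theorem Inv_node_mul {lo hi : ℕ} {s m : ℝ} {lc rc : STree} (c : ℝ)
    (h : Inv (node lo hi s m lc rc)) : Inv (node lo hi (s * c) (m * c) lc rc) := by
  obtain ⟨hs, hl, hr⟩ := h
  refine ⟨?_, hl, hr⟩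
  rw [total_eq_mul (m * c) lc, total_eq_mul (m * c) rc, hs, total_eq_mul m lc,
    total_eq_mul m rc]
  ring

theorem Inv_applyAll (c : ℝ) {t : STree} (h : Inv t) : Inv (applyAll c t) := by
  cases t with
  | leaf => trivial
  | node => exact Inv_node_mul c h

theorem sumOf_eq_total {t : STree} (h : Inv t) : sumOf t = total 1 t := by
  cases t with
  | leaf => simp [sumOf, total]
  | node => simpa only [sumOf, total, one_mul] using h.1

section LazyMul

variable (l r : ℕ) (c : ℝ)

theorem idxs_lazyMul (t : STree) : idxs (lazyMul l r c t) = idxs t := by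
  fun_induction lazyMul l r c t with
  | case5 lo hi s m lc rc _ _ _ _ ihl ihr =>
    simp +zetaDelta only [idxs, ihl, ihr, idxs_applyAll]
  | _ => rfl

theorem WF_lazyMul {t : STree} (h : WF t) : WF (lazyMul l r c t) := by
  fun_induction lazyMul l r c t with
  | case5 lo hi s m lc rc _ _ _ _ ihl ihr =>
    obtain ⟨hl, hr, hrange⟩ := h
    refine ⟨ihl (WF_applyAll m hl), ihr (WF_applyAll m hr), ?_⟩
    simpa +zetaDelta only [idxs_lazyMul, idxs_applyAll] using hrange
  | _ => exact h

theorem Inv_lazyMul {t : STree} (h : Inv t) : Inv (lazyMul l r c t) := by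
  fun_induction lazyMul l r c t with
  | case4 => exact Inv_node_mul c h
  | case5 lo hi s m lc rc _ _ _ _ ihl ihr =>
    obtain ⟨-, hl, hr⟩ := h
    have hl' := ihl (Inv_applyAll m hl)
    have hr' := ihr (Inv_applyAll m hr)
    exact ⟨by rw [sumOf_eq_total hl', sumOf_eq_total hr'], hl', hr'⟩
  | _ => trivial

theorem rSum_lazyMul {t : STree} (h : WF t) (a : ℝ) (i : ℕ) :
    rSum a i i (lazyMul l r c t) = (if l ≤ i ∧ i ≤ r then c else 1) * rSum a i i t := by
  fun_induction lazyMul l r c t generalizing a with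
  | case1 | case2 => simp only [rSum]; split_ifs <;> first | omega | ring
  | case3 lo hi s m lc rc hdisj =>
    split_ifs with hmem
    · rw [rSum_eq_zero_of_not_mem a (not_mem_idxs_of_WF h (by omega)), mul_zero]
    · rw [one_mul]
  | case4 lo hi s m lc rc _ hsub =>
    change rSum a i i (applyAll c (node lo hi s m lc rc)) = _
    rw [rSum_applyAll]
    split_ifs with hmem
    · rfl
    · rw [rSum_eq_zero_of_not_mem a (not_mem_idxs_of_WF h (by omega)), mul_zero, mul_zero]
  | case5 lo hi s m lc rc _ _ _ _ ihl ihr =>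
    obtain ⟨hl, hr, -⟩ := h
    simp only [rSum, mul_one]
    rw [ihl (WF_applyAll m hl), ihr (WF_applyAll m hr), rSum_applyAll, rSum_applyAll,
      rSum_eq_mul (a * m), rSum_eq_mul (a * m), rSum_eq_mul a i i lc, rSum_eq_mul a i i rc]
    ring

end LazyMul

/-- Correctness of `LazyMultiply`: on a well-formed tree satisfying the
lazy-propagation invariant, `lazyMul l r c` preserves well-formedness and the
invariant, multiplies the true value of every leaf with index in `[l, r]` by `c`,
and leaves the true values of all other leaves unchanged. -/
theorem lazyMul_correct (t : STree) (l r : ℕ) (c : ℝ) (hwf : WF t) (hinv : Inv t) :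
    WF (lazyMul l r c t) ∧ Inv (lazyMul l r c t) ∧
    (∀ i : ℕ, l ≤ i → i ≤ r → rSum 1 i i (lazyMul l r c t) = c * rSum 1 i i t) ∧
    (∀ i : ℕ, i < l ∨ r < i → rSum 1 i i (lazyMul l r c t) = rSum 1 i i t) := by
  refine ⟨WF_lazyMul l r c hwf, Inv_lazyMul l r c hinv, fun i hl hr => ?_, fun i hout => ?_⟩
  · rw [rSum_lazyMul l r c hwf, if_pos ⟨hl, hr⟩]
  · rw [rSum_lazyMul l r c hwf, if_neg (by omega), one_mul]

end STree
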